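/- arXiv:2503.00183 — 5 statements merged into one kernel-verified Lean document; each statement's English description precedes it below -/
import Mathlib

section
/- Let Φ be a (possibly non-reduced) root system in a finite-dimensional real vector space V. Let Φ₁ ⊆ Φ be a subset that is itself a root system in its span, let f₁ be a linear functional on V with f₁(x) ≠ 0 for all x ∈ Φ₁, put Φ₁⁺ = {x ∈ Φ₁ : f₁(x) > 0}, and let a ∈ Φ₁⁺ be simple with respect to Φ₁⁺, i.e. a is not the sum of two elements of Φ₁⁺. Then there exists a linear functional f on V with f(x) ≠ 0 for all x ∈ Φ and {x ∈ Φ₁ : f(x) > 0} = Φ₁⁺, such that, setting Φ⁺ = {x ∈ Φ : f(x) > 0}, either a is not the sum of two elements of Φ⁺, or a/2 ∈ Φ and a/2 is not the sum of two elements of Φ⁺. -/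
set_option maxHeartbeats 1600000

lemma eps_lemma {α : Type*} (s : Finset α) (φ ψ : α → ℝ)
    (h : ∀ x ∈ s, 0 < φ x) :
    ∃ ε : ℝ, 0 < ε ∧ ∀ x ∈ s, ε * |ψ x| < φ x := by
  classical
  induction s using Finset.induction with
  | empty => exact ⟨1, one_pos, by simp⟩
  | @insert y s hys ih =>
    obtain ⟨ε, hε, hε'⟩ := ih (fun x hx => h x (Finset.mem_insert_of_mem hx))
    have hy : 0 < φ y := h y (Finset.mem_insert_self _ _)
    refine ⟨min ε (φ y / (|ψ y| + 1)), lt_min hε (by positivity), ?_⟩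
    intro x hxm
    rcases Finset.mem_insert.1 hxm with rfl | hxs
    · calc min ε (φ x / (|ψ x| + 1)) * |ψ x| ≤ (φ x / (|ψ x| + 1)) * |ψ x| := by
            apply mul_le_mul_of_nonneg_right (min_le_right _ _) (abs_nonneg _)
        _ < φ x := by
            rw [div_mul_eq_mul_div, div_lt_iff₀ (by positivity)]
            nlinarith [abs_nonneg (ψ x)]
    · calc min ε (φ y / (|ψ y| + 1)) * |ψ x| ≤ ε * |ψ x| := by
            apply mul_le_mul_of_nonneg_right (min_le_left _ _) (abs_nonneg _)
        _ < φ x := hε' x hxs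


lemma matA (A : Matrix (Fin 2) (Fin 2) ℤ) (h : A * A = (2 : ℤ) • A - 1) (N : ℕ) (hN : 1 ≤ N)
    (hA : A ^ N = 1) : A = 1 := by
  have key : ∀ k : ℕ, A ^ k = 1 + (k : ℤ) • (A - 1) := by
    intro k
    induction k with
    | zero => simp
    | succ k ih =>
      rw [pow_succ, ih]
      have expand : (1 + (k : ℤ) • (A - 1)) * A = A + (k : ℤ) • (A * A - A) := by
        rw [add_mul, one_mul, smul_mul_assoc, sub_mul, one_mul]
      rw [expand, h]
      rw [show (2 : ℤ) • A - 1 - A = A - 1 by rw [two_smul]; abel]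
      push_cast
      rw [add_smul, one_smul]
      abel
  have h1 : (1 : Matrix (Fin 2) (Fin 2) ℤ) = 1 + (N : ℤ) • (A - 1) := by rw [← key N, hA]
  have h2 : (N : ℤ) • (A - 1) = 0 := by linear_combination (norm := abel) h1.symm
  have h3 : A - 1 = 0 := by
    ext i j
    have := congrFun (congrFun h2 i) j
    simp only [Matrix.smul_apply, Matrix.zero_apply, smul_eq_mul, mul_eq_zero] at this
    rcases this with h | h
    · exfalso; omega
    · simpa using h
  linear_combination (norm := abel) h3

lemma matB (A : Matrix (Fin 2) (Fin 2) ℤ) (t : ℤ) (ht : 3 ≤ t) (h : A * A = t • A - 1)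
    (htr : A.trace = t) (N : ℕ) (hN : 1 ≤ N) (hA : A ^ N = 1) : False := by
  set u : ℕ → ℤ := fun k => (A ^ k).trace with hu
  have hu0 : u 0 = 2 := by simp [hu, Matrix.trace_one]
  have hu1 : u 1 = t := by simp [hu, htr]
  have hrec : ∀ k : ℕ, u (k + 1 + 1) = t * u (k + 1) - u k := by
    intro k
    have e : A ^ (k + 1 + 1) = t • A ^ (k + 1) - A ^ k := by
      have e1 : A ^ (k + 1 + 1) = A ^ k * (A * A) := by
        rw [show k + 1 + 1 = k + 2 from rfl, pow_add, pow_two]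
      rw [e1, h, mul_sub, mul_one, mul_smul_comm, ← pow_succ]
    show (A ^ (k + 1 + 1)).trace = t * (A ^ (k + 1)).trace - (A ^ k).trace
    rw [e, Matrix.trace_sub, Matrix.trace_smul, smul_eq_mul]
  have key : ∀ k : ℕ, 2 ≤ u k ∧ u k ≤ u (k + 1) := by
    intro k
    induction k with
    | zero =>
      refine ⟨by omega, ?_⟩
      rw [hu0, show (0 : ℕ) + 1 = 1 from rfl, hu1]; omega
    | succ k ih =>
      obtain ⟨h1, h2⟩ := ih
      have h3 : 2 ≤ u (k + 1) := le_trans h1 h2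
      refine ⟨h3, ?_⟩
      have h4 := hrec k
      nlinarith
  have mono : ∀ k : ℕ, u 1 ≤ u (k + 1) := by
    intro k
    induction k with
    | zero => exact le_refl _
    | succ k ih => exact le_trans ih (key (k + 1)).2
  have hNu : u N = 2 := by show (A ^ N).trace = 2; rw [hA]; simp [Matrix.trace_one]
  obtain ⟨k, rfl⟩ : ∃ k, N = k + 1 := ⟨N - 1, by omega⟩
  have := mono k
  omega

lemma matMain (m n : ℤ) (N : ℕ) (hN : 1 ≤ N)
    (h : (!![m * n - 1, n; -m, -1]) ^ N = 1) (hn : n ≠ 0) :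
    m * n = 1 ∨ m * n = 2 ∨ m * n = 3 := by
  set t : ℤ := m * n - 2 with hts
  set A : Matrix (Fin 2) (Fin 2) ℤ := !![m * n - 1, n; -m, -1] with hA
  have hCH : A * A = t • A - 1 := by
    ext i j
    fin_cases i <;> fin_cases j <;>
      simp [hA, hts, Matrix.mul_apply, Fin.sum_univ_two, Matrix.smul_apply, Matrix.one_apply,
        smul_eq_mul] <;> ring
  have htr : A.trace = t := by
    rw [Matrix.trace_fin_two]
    simp [hA, hts]; ring
  -- rule out t ≥ 3
  have hb1 : ¬ (3 ≤ t) := fun h3 => matB A t h3 hCH htr N hN h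
  -- rule out t ≤ -3
  have hb2 : ¬ (t ≤ -3) := by
    intro h3
    set C : Matrix (Fin 2) (Fin 2) ℤ :=
      !![t * (m * n - 1) - 1, t * n; -(t * m), -t - 1] with hC
    have hAC : A * A = C := by
      ext i j
      fin_cases i <;> fin_cases j <;>
        simp [hA, hC, hts, Matrix.mul_apply, Fin.sum_univ_two] <;> ring
    have hCpow : C ^ N = 1 := by
      rw [← hAC, ← pow_two, ← pow_mul, mul_comm, pow_mul, h, one_pow]
    have hCCH : C * C = (t * t - 2) • C - 1 := by
      ext i j
      fin_cases i <;> fin_cases j <;>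
        simp [hC, hts, Matrix.mul_apply, Fin.sum_univ_two, Matrix.smul_apply, Matrix.one_apply,
          smul_eq_mul] <;> ring
    have hCtr : C.trace = t * t - 2 := by
      rw [Matrix.trace_fin_two]
      simp [hC, hts]; ring
    exact matB C (t * t - 2) (by nlinarith) hCCH hCtr N hN hCpow
  -- rule out t = 2
  have hb3 : t ≠ 2 := by
    intro h2
    have := matA A (by rw [← h2]; exact hCH) N hN h
    have hn0 : A 0 1 = n := by simp [hA]
    rw [this] at hn0
    simp [Matrix.one_apply] at hn0
    exact hn (hn0.symm)
  -- rule out t = -2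
  have hb4 : t ≠ -2 := by
    intro h2
    have hneg : (-A) * (-A) = (2 : ℤ) • (-A) - 1 := by
      rw [neg_mul_neg, hCH, h2]
      ext i j
      simp [Matrix.smul_apply]
    have hnegpow : (-A) ^ (2 * N) = 1 := by
      rw [Even.neg_pow (even_two_mul N), mul_comm, pow_mul, h, one_pow]
    have := matA (-A) hneg (2 * N) (by omega) hnegpow
    have hn0 : (-A) 0 1 = -n := by simp [hA]
    rw [this] at hn0
    simp [Matrix.one_apply] at hn0
    exact hn (by omega)
  omega

lemma keyP {V : Type*} [AddCommGroup V] [Module ℝ V]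
    (Φ₁ : Set V) (hfin : Φ₁.Finite)
    (hΦ₁root : ∀ a ∈ Φ₁, ∃ acov : V →ₗ[ℝ] ℝ, acov a = 2 ∧
      (∀ b ∈ Φ₁, ∃ n : ℤ, acov b = (n : ℝ)) ∧
      Set.BijOn (fun x => x - acov x • a) Φ₁ Φ₁)
    (f₁ : V →ₗ[ℝ] ℝ) (hf₁ : ∀ x ∈ Φ₁, f₁ x ≠ 0)
    (a : V) (ha : a ∈ Φ₁) (hapos : 0 < f₁ a)
    (hsimple : ¬ ∃ b ∈ {x ∈ Φ₁ | 0 < f₁ x}, ∃ c ∈ {x ∈ Φ₁ | 0 < f₁ x}, a = b + c)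
    (aco : V →ₗ[ℝ] ℝ) (haco2 : aco a = 2)
    (hacoInt : ∀ b ∈ Φ₁, ∃ n : ℤ, aco b = (n : ℝ))
    (hacoBij : Set.BijOn (fun v => v - aco v • a) Φ₁ Φ₁)
    (x : V) (hx : x ∈ Φ₁) (hfx : 0 < f₁ x) (hxspan : x ∉ Submodule.span ℝ {a}) :
    0 < f₁ (x - aco x • a) := by
  classical
  have hneg : ∀ b ∈ Φ₁, -b ∈ Φ₁ := by
    intro b hb
    obtain ⟨c, hc2, _, hbij⟩ := hΦ₁root b hb
    have h := hbij.mapsTo hb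
    rw [hc2] at h
    have e : b - (2 : ℝ) • b = -b := by module
    rwa [e] at h
  have hsx : x - aco x • a ∈ Φ₁ := hacoBij.mapsTo hx
  have hfsx := hf₁ _ hsx
  by_contra hcon
  have hneg' : f₁ (x - aco x • a) < 0 := lt_of_le_of_ne (not_lt.1 hcon) hfsx
  obtain ⟨n, hn⟩ := hacoInt x hx
  have hval : f₁ (x - aco x • a) = f₁ x - (n : ℝ) * f₁ a := by
    rw [map_sub, LinearMap.map_smul, hn, smul_eq_mul]
  have hnr : 0 < (n : ℝ) := by nlinarith
  have hn1 : 1 ≤ n := by exact_mod_cast hnr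
  obtain ⟨y, hy⟩ : ∃ y : V, y = (n : ℝ) • a - x := ⟨_, rfl⟩
  have hyΦ : y ∈ Φ₁ := by
    have h := hneg _ hsx
    have e : -(x - aco x • a) = y := by rw [hn, hy]; module
    rwa [e] at h
  have hyf : 0 < f₁ y := by
    have e : f₁ y = (n : ℝ) * f₁ a - f₁ x := by
      rw [hy, map_sub, LinearMap.map_smul, smul_eq_mul]
    linarith
  rcases eq_or_lt_of_le hn1 with h1 | h2
  · -- n = 1 : a = x + y
    apply hsimple
    refine ⟨x, ⟨hx, hfx⟩, y, ⟨hyΦ, hyf⟩, ?_⟩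
    rw [hy, ← h1]; push_cast; module
  · -- n ≥ 2
    have hn2 : 2 ≤ n := h2
    obtain ⟨xco, hxco2, hxcoInt, hxcoBij⟩ := hΦ₁root x hx
    obtain ⟨m, hm⟩ := hxcoInt a ha
    have ha0 : a ≠ 0 := by
      intro h0; rw [h0] at hapos; simp at hapos
    have hind : ∀ p q : ℝ, p • a + q • x = 0 → p = 0 ∧ q = 0 := by
      intro p q hpq
      by_cases hq : q = 0
      · subst hq
        rw [zero_smul, add_zero] at hpq
        rcases smul_eq_zero.1 hpq with h | h
        · exact ⟨h, rfl⟩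
        · exact absurd h ha0
      · exfalso
        apply hxspan
        rw [Submodule.mem_span_singleton]
        have h1 : q • x = (-p) • a := by
          have h2 := eq_neg_of_add_eq_zero_right hpq
          rw [h2, neg_smul]
        exact ⟨q⁻¹ * (-p), by rw [mul_smul, ← h1, smul_smul, inv_mul_cancel₀ hq, one_smul]⟩
    have hind2 : ∀ p q p' q' : ℝ, p • a + q • x = p' • a + q' • x → p = p' ∧ q = q' := by
      intro p q p' q' hpq
      have h0 : (p - p') • a + (q - q') • x = 0 := by
        rw [sub_smul, sub_smul, show p • a - p' • a + (q • x - q' • x)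
          = (p • a + q • x) - (p' • a + q' • x) by abel, hpq, sub_self]
      obtain ⟨e1, e2⟩ := hind _ _ h0
      constructor <;> linarith
    set σ : V → V := fun v => (v - xco v • x) - aco (v - xco v • x) • a with hσ
    set τ : V → V := fun v => (v - aco v • a) - xco (v - aco v • a) • x with hτ
    have hτσ : ∀ v, τ (σ v) = v := by
      intro v
      simp only [hσ, hτ, map_sub, LinearMap.map_smul, haco2, hxco2, smul_eq_mul]
      module
    have hσinj : Function.Injective σ := Function.LeftInverse.injective hτσ
    have hσmaps : ∀ v ∈ Φ₁, σ v ∈ Φ₁ := by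
      intro v hv
      have h1 := hxcoBij.mapsTo hv
      have h2 := hacoBij.mapsTo h1
      exact h2
    have hiterMem : ∀ (k : ℕ) (v : V), v ∈ Φ₁ → σ^[k] v ∈ Φ₁ := by
      intro k
      induction k with
      | zero => intro v hv; simpa using hv
      | succ k ih =>
        intro v hv
        rw [Function.iterate_succ_apply]
        exact ih _ (hσmaps v hv)
    have hfix : ∀ v ∈ Φ₁, ∃ N : ℕ, 1 ≤ N ∧ σ^[N] v = v := by
      intro v hv
      have hmaps : Set.MapsTo (fun k : ℕ => σ^[k] v) Set.univ Φ₁ := fun k _ => hiterMem k v hv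
      obtain ⟨k, -, l, -, hkl, he⟩ := Set.infinite_univ.exists_ne_map_eq_of_mapsTo hmaps hfin
      rcases hkl.lt_or_gt with hlt | hlt
      · refine ⟨l - k, by omega, ?_⟩
        have h1 : σ^[k] (σ^[l - k] v) = σ^[k] v := by
          rw [← Function.iterate_add_apply, show k + (l - k) = l by omega]
          exact he.symm
        exact (hσinj.iterate k) h1
      · refine ⟨k - l, by omega, ?_⟩
        have h1 : σ^[l] (σ^[k - l] v) = σ^[l] v := by
          rw [← Function.iterate_add_apply, show l + (k - l) = k by omega]
          exact he
        exact (hσinj.iterate l) h1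
    obtain ⟨N₁, hN₁, hfa⟩ := hfix a ha
    obtain ⟨N₂, hN₂, hfxx⟩ := hfix x hx
    set N := N₁ * N₂ with hNdef
    have hfixa : σ^[N] a = a := by
      rw [hNdef, Function.iterate_mul]
      exact Function.iterate_fixed hfa N₂
    have hfixx : σ^[N] x = x := by
      rw [hNdef, mul_comm, Function.iterate_mul]
      exact Function.iterate_fixed hfxx N₁
    set M : Matrix (Fin 2) (Fin 2) ℤ := !![m * n - 1, n; -m, -1] with hM
    have hσc : ∀ p q : ℤ, σ ((p : ℝ) • a + (q : ℝ) • x)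
        = (((m * n - 1) * p + n * q : ℤ) : ℝ) • a + ((-m * p - q : ℤ) : ℝ) • x := by
      intro p q
      simp only [hσ, map_add, LinearMap.map_smul, map_sub, haco2, hxco2, hn, hm, smul_eq_mul]
      push_cast
      module
    have hcomb : ∀ k : ℕ, σ^[k] a = (((M ^ k) 0 0 : ℤ) : ℝ) • a + (((M ^ k) 1 0 : ℤ) : ℝ) • x
        ∧ σ^[k] x = (((M ^ k) 0 1 : ℤ) : ℝ) • a + (((M ^ k) 1 1 : ℤ) : ℝ) • x := by
      intro k
      induction k with
      | zero => simp [Matrix.one_apply]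
      | succ k ih =>
        obtain ⟨iha, ihx⟩ := ih
        have e1 : (M ^ (k + 1)) 0 0 = (m * n - 1) * ((M ^ k) 0 0) + n * ((M ^ k) 1 0) := by
          rw [pow_succ', Matrix.mul_apply, Fin.sum_univ_two]; simp [hM]
        have e2 : (M ^ (k + 1)) 1 0 = -m * ((M ^ k) 0 0) + -1 * ((M ^ k) 1 0) := by
          rw [pow_succ', Matrix.mul_apply, Fin.sum_univ_two]; simp [hM]
        have e3 : (M ^ (k + 1)) 0 1 = (m * n - 1) * ((M ^ k) 0 1) + n * ((M ^ k) 1 1) := by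
          rw [pow_succ', Matrix.mul_apply, Fin.sum_univ_two]; simp [hM]
        have e4 : (M ^ (k + 1)) 1 1 = -m * ((M ^ k) 0 1) + -1 * ((M ^ k) 1 1) := by
          rw [pow_succ', Matrix.mul_apply, Fin.sum_univ_two]; simp [hM]
        constructor
        · rw [Function.iterate_succ_apply', iha, hσc ((M ^ k) 0 0) ((M ^ k) 1 0), e1, e2]
          push_cast
          module
        · rw [Function.iterate_succ_apply', ihx, hσc ((M ^ k) 0 1) ((M ^ k) 1 1), e3, e4]
          push_cast
          module
    have hMN : M ^ N = 1 := by
      obtain ⟨ca, cx⟩ := hcomb N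
      rw [hfixa] at ca
      rw [hfixx] at cx
      have e1 := hind2 (((M ^ N) 0 0 : ℤ) : ℝ) (((M ^ N) 1 0 : ℤ) : ℝ) 1 0
        (by rw [← ca, one_smul, zero_smul, add_zero])
      have e2 := hind2 (((M ^ N) 0 1 : ℤ) : ℝ) (((M ^ N) 1 1 : ℤ) : ℝ) 0 1
        (by rw [← cx, one_smul, zero_smul, zero_add])
      ext i j
      fin_cases i <;> fin_cases j <;> simp only [Matrix.one_apply] <;> norm_num
      · exact_mod_cast e1.1
      · exact_mod_cast e2.1
      · exact_mod_cast e1.2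
      · exact_mod_cast e2.2
    have hNpos : 1 ≤ N := Nat.one_le_iff_ne_zero.2 (by positivity)
    have hmn := matMain m n N hNpos (by rw [← hM]; exact hMN) (by omega)
    have hm1 : m = 1 := by
      have hnp : (0 : ℤ) < n := by omega
      rcases hmn with h | h | h <;> nlinarith
    have hn23 : n = 2 ∨ n = 3 := by
      rcases hmn with h | h | h <;> rw [hm1, one_mul] at h <;> omega
    have haxm : a - x ∈ Φ₁ := by
      have h := hxcoBij.mapsTo ha
      rw [hm, hm1] at h
      simpa using h
    have hfax := hf₁ _ haxm
    rcases lt_or_gt_of_ne hfax with hlt | hgt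
    · have hxam : x - a ∈ Φ₁ := by
        have h := hneg _ haxm
        simpa [neg_sub] using h
      have hxaf : 0 < f₁ (x - a) := by
        have e : f₁ (x - a) = -(f₁ (a - x)) := by rw [map_sub, map_sub]; ring
        rw [e]; linarith
      rcases hn23 with hn3 | hn3
      · -- n = 2 : a = y + (x - a)
        apply hsimple
        refine ⟨y, ⟨hyΦ, hyf⟩, x - a, ⟨hxam, hxaf⟩, ?_⟩
        rw [hy, hn3]; push_cast; module
      · -- n = 3
        have hacu : aco (x - a) = 1 := by
          rw [map_sub, hn, haco2, hn3]; push_cast; ring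
        have hu2 : (x - a) - aco (x - a) • a ∈ Φ₁ := hacoBij.mapsTo hxam
        rw [hacu, one_smul] at hu2
        have hf2 := hf₁ _ hu2
        rcases lt_or_gt_of_ne hf2 with h2lt | h2gt
        · apply hsimple
          refine ⟨-(x - a - a), ⟨hneg _ hu2, by rw [map_neg]; linarith⟩,
            x - a, ⟨hxam, hxaf⟩, by module⟩
        · apply hsimple
          refine ⟨x - a - a, ⟨hu2, h2gt⟩, y, ⟨hyΦ, hyf⟩, ?_⟩
          rw [hy, hn3]; push_cast; module
    · apply hsimple
      exact ⟨a - x, ⟨haxm, hgt⟩, x, ⟨hx, hfx⟩, by module⟩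


/-- Let `Φ` be a (possibly non-reduced) root system in a finite-dimensional real
vector space `V`, and let `Φ₁ ⊆ Φ` be a subset that is itself a root system.  Let `f₁` be a
linear functional nonvanishing on `Φ₁`, with positive system `Φ₁⁺ = {x ∈ Φ₁ | 0 < f₁ x}`, and let
`a ∈ Φ₁⁺` be simple (not a sum of two elements of `Φ₁⁺`).  Then there is a linear functional `f`
nonvanishing on `Φ`, whose positive system on `Φ₁` is `Φ₁⁺`, such that either `a` is simple with
respect to `Φ⁺ = {x ∈ Φ | 0 < f x}`, or `a/2 ∈ Φ` and `a/2` is simple with respect to `Φ⁺`. -/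
theorem statement4 {V : Type*} [AddCommGroup V] [Module ℝ V] [FiniteDimensional ℝ V]
    (Φ : Set V) (hΦfin : Φ.Finite) (hΦ0 : (0 : V) ∉ Φ)
    (hΦroot : ∀ a ∈ Φ, ∃ acov : V →ₗ[ℝ] ℝ, acov a = 2 ∧
      (∀ b ∈ Φ, ∃ n : ℤ, acov b = (n : ℝ)) ∧
      Set.BijOn (fun x => x - acov x • a) Φ Φ)
    (Φ₁ : Set V) (hsub : Φ₁ ⊆ Φ)
    (hΦ₁root : ∀ a ∈ Φ₁, ∃ acov : V →ₗ[ℝ] ℝ, acov a = 2 ∧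
      (∀ b ∈ Φ₁, ∃ n : ℤ, acov b = (n : ℝ)) ∧
      Set.BijOn (fun x => x - acov x • a) Φ₁ Φ₁)
    (f₁ : V →ₗ[ℝ] ℝ) (hf₁ : ∀ x ∈ Φ₁, f₁ x ≠ 0)
    (a : V) (ha : a ∈ Φ₁) (hapos : 0 < f₁ a)
    (hsimple : ¬ ∃ b ∈ {x ∈ Φ₁ | 0 < f₁ x}, ∃ c ∈ {x ∈ Φ₁ | 0 < f₁ x}, a = b + c) :
    ∃ f : V →ₗ[ℝ] ℝ, (∀ x ∈ Φ, f x ≠ 0) ∧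
      {x ∈ Φ₁ | 0 < f x} = {x ∈ Φ₁ | 0 < f₁ x} ∧
      ((¬ ∃ b ∈ {x ∈ Φ | 0 < f x}, ∃ c ∈ {x ∈ Φ | 0 < f x}, a = b + c) ∨
        (((2 : ℝ)⁻¹ • a ∈ Φ) ∧
          ¬ ∃ b ∈ {x ∈ Φ | 0 < f x}, ∃ c ∈ {x ∈ Φ | 0 < f x}, (2 : ℝ)⁻¹ • a = b + c)) := by
  classical
  have haΦ : a ∈ Φ := hsub ha
  have ha0 : a ≠ 0 := by
    intro h0; rw [h0] at hapos; simp at hapos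
  have hfin1 : Φ₁.Finite := hΦfin.subset hsub
  have hneg1 : ∀ b ∈ Φ₁, -b ∈ Φ₁ := by
    intro b hb
    obtain ⟨c, hc2, _, hbij⟩ := hΦ₁root b hb
    have h := hbij.mapsTo hb
    rw [hc2] at h
    have e : b - (2 : ℝ) • b = -b := by module
    rwa [e] at h
  obtain ⟨aco, haco2, hacoInt, hacoBij⟩ := hΦ₁root a ha
  set h₀ : V →ₗ[ℝ] ℝ := (2 : ℝ) • f₁ - f₁ a • aco with hh₀
  have hh₀a : h₀ a = 0 := by
    simp [hh₀, haco2]; ring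
  have hh₀pos : ∀ x ∈ Φ₁, 0 < f₁ x → x ∉ Submodule.span ℝ {a} → 0 < h₀ x := by
    intro x hx hfx hxs
    have hk := keyP Φ₁ hfin1 hΦ₁root f₁ hf₁ a ha hapos hsimple aco haco2 hacoInt hacoBij
      x hx hfx hxs
    have e : h₀ x = f₁ x + f₁ (x - aco x • a) := by
      simp [hh₀, map_sub, smul_eq_mul]; ring
    rw [e]; linarith
  have hsep : ∀ y : V, y ∉ Submodule.span ℝ {a} → ∃ g : V →ₗ[ℝ] ℝ, g a = 0 ∧ g y ≠ 0 := by
    intro y hy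
    set p := Submodule.span ℝ {a} with hp
    have hq : p.mkQ y ≠ 0 := by
      rw [Submodule.mkQ_apply]
      intro h0
      exact hy ((Submodule.Quotient.mk_eq_zero p).1 h0)
    obtain ⟨φ, hφ⟩ : ∃ φ : Module.Dual ℝ (V ⧸ p), φ (p.mkQ y) ≠ 0 := by
      by_contra hcon
      push_neg at hcon
      exact hq ((Module.forall_dual_apply_eq_zero_iff ℝ _).1 hcon)
    refine ⟨φ.comp p.mkQ, ?_, hφ⟩
    have : p.mkQ a = 0 := (Submodule.Quotient.mk_eq_zero p).2 (Submodule.mem_span_singleton_self a)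
    simp [this]
  have stepB : ∀ S : Finset V, ∃ h : V →ₗ[ℝ] ℝ, h a = 0 ∧
      (∀ x ∈ Φ₁, 0 < f₁ x → x ∉ Submodule.span ℝ {a} → 0 < h x) ∧
      (∀ y ∈ S, y ∉ Submodule.span ℝ {a} → h y ≠ 0) := by
    intro S
    induction S using Finset.induction with
    | empty => exact ⟨h₀, hh₀a, hh₀pos, by simp⟩
    | @insert y S hyS ih =>
      obtain ⟨h, h1, h2, h3⟩ := ih
      by_cases hyspan : y ∈ Submodule.span ℝ {a}
      · refine ⟨h, h1, h2, ?_⟩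
        intro y' hy' hys'
        rcases Finset.mem_insert.1 hy' with rfl | hy'S
        · exact absurd hyspan hys'
        · exact h3 y' hy'S hys'
      · by_cases hhy : h y = 0
        · obtain ⟨g, hga, hgy⟩ := hsep y hyspan
          set T : Finset V := (hfin1.toFinset ∪ S).filter (fun v => h v ≠ 0) with hT
          obtain ⟨ε, hε, hεlt⟩ := eps_lemma T (fun v => |h v|) (fun v => g v)
            (fun v hv => abs_pos.2 (Finset.mem_filter.1 hv).2)
          refine ⟨h + ε • g, ?_, ?_, ?_⟩
          · simp [h1, hga]
          · intro x hx hfx hxs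
            have hx' : 0 < h x := h2 x hx hfx hxs
            have hxT : x ∈ T := Finset.mem_filter.2
              ⟨Finset.mem_union_left _ (hfin1.mem_toFinset.2 hx), ne_of_gt hx'⟩
            have hb := hεlt x hxT
            rw [abs_of_pos hx'] at hb
            simp only [LinearMap.add_apply, LinearMap.smul_apply, smul_eq_mul]
            nlinarith [neg_abs_le (g x), abs_nonneg (g x)]
          · intro y' hy' hys'
            rcases Finset.mem_insert.1 hy' with rfl | hy'S
            · simp only [LinearMap.add_apply, LinearMap.smul_apply, smul_eq_mul, hhy, zero_add]
              exact mul_ne_zero (ne_of_gt hε) hgy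
            · have hy0 : h y' ≠ 0 := h3 y' hy'S hys'
              have hyT : y' ∈ T := Finset.mem_filter.2 ⟨Finset.mem_union_right _ hy'S, hy0⟩
              have hb := hεlt y' hyT
              simp only [LinearMap.add_apply, LinearMap.smul_apply, smul_eq_mul]
              intro hzero
              have he : h y' = -(ε * g y') := by linarith
              have : |h y'| = ε * |g y'| := by
                rw [he, abs_neg, abs_mul, abs_of_pos hε]
              linarith
        · refine ⟨h, h1, h2, ?_⟩
          intro y' hy' hys'
          rcases Finset.mem_insert.1 hy' with rfl | hy'S
          · exact hhy
          · exact h3 y' hy'S hys'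
  obtain ⟨h, hha, hhpos, hhne⟩ := stepB hΦfin.toFinset
  have hhne' : ∀ y ∈ Φ, y ∉ Submodule.span ℝ {a} → h y ≠ 0 :=
    fun y hy => hhne y (hΦfin.mem_toFinset.2 hy)
  -- proportionality constants
  have hmult : ∀ b ∈ Φ, ∀ t : ℝ, b = t • a →
      t = 1 / 2 ∨ t = 1 ∨ t = 2 ∨ t = -(1 / 2) ∨ t = -1 ∨ t = -2 := by
    intro b hb t hbt
    have hb0 : b ≠ 0 := fun h0 => hΦ0 (h0 ▸ hb)
    have ht0 : t ≠ 0 := by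
      rintro rfl; rw [zero_smul] at hbt; exact hb0 hbt
    obtain ⟨aco', haco2', hacoInt', _⟩ := hΦroot a haΦ
    obtain ⟨k, hk⟩ := hacoInt' b hb
    obtain ⟨bco, hbco2, hbcoInt, _⟩ := hΦroot b hb
    obtain ⟨j, hj⟩ := hbcoInt a haΦ
    have hk2 : (k : ℝ) = 2 * t := by
      rw [← hk, hbt, map_smul, haco2', smul_eq_mul]; ring
    have hj2 : (j : ℝ) * t = 2 := by
      have e : bco b = t * bco a := by rw [hbt, map_smul, smul_eq_mul]
      rw [hbco2, hj] at e
      linarith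
    have hkj : k * j = 4 := by
      have e : ((k * j : ℤ) : ℝ) = 4 := by
        push_cast
        rw [hk2]
        linear_combination 2 * hj2
      exact_mod_cast e
    have hk0 : k ≠ 0 := by rintro rfl; simp at hkj
    have hkb : k = 1 ∨ k = -1 ∨ k = 2 ∨ k = -2 ∨ k = 4 ∨ k = -4 := by
      have h4 : k ∣ 4 := ⟨j, hkj.symm⟩
      have hub : k ≤ 4 := Int.le_of_dvd (by norm_num) h4
      have hlb : (-4 : ℤ) ≤ k := by
        have h5 : -k ≤ 4 := Int.le_of_dvd (by norm_num) ((neg_dvd).2 h4)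
        omega
      interval_cases k <;> omega
    have ht : t = (k : ℝ) / 2 := by rw [hk2]; ring
    rcases hkb with rfl | rfl | rfl | rfl | rfl | rfl <;> rw [ht] <;> norm_num
  -- choose ε
  obtain ⟨ε, hε, hεlt⟩ := eps_lemma (hΦfin.toFinset.filter (fun v => h v ≠ 0))
    (fun v => |h v|) (fun v => |f₁ v| + f₁ a + 1)
    (fun v hv => abs_pos.2 (Finset.mem_filter.1 hv).2)
  set f : V →ₗ[ℝ] ℝ := h + ε • f₁ with hfdef
  have hfval : ∀ v, f v = h v + ε * f₁ v := by
    intro v; simp [hfdef]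
  have hbig : ∀ v ∈ Φ, h v ≠ 0 → ε * (|f₁ v| + f₁ a + 1) < |h v| := by
    intro v hv hv0
    have hb := hεlt v (Finset.mem_filter.2 ⟨hΦfin.mem_toFinset.2 hv, hv0⟩)
    rwa [abs_of_pos (by positivity)] at hb
  have hεa : 0 < ε * f₁ a := mul_pos hε hapos
  have key1 : ∀ v ∈ Φ, 0 < h v → ε * f₁ a < f v := by
    intro v hv hpos
    have hb := hbig v hv (ne_of_gt hpos)
    rw [abs_of_pos hpos] at hb
    rw [hfval]
    nlinarith [neg_abs_le (f₁ v), abs_nonneg (f₁ v)]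
  have key2 : ∀ v ∈ Φ, h v < 0 → f v < -(ε * f₁ a) := by
    intro v hv hneg
    have hb := hbig v hv (ne_of_lt hneg)
    rw [abs_of_neg hneg] at hb
    rw [hfval]
    nlinarith [le_abs_self (f₁ v), abs_nonneg (f₁ v)]
  have keyspan : ∀ v, v ∈ Submodule.span ℝ {a} → ∃ t : ℝ, v = t • a ∧ f v = t * (ε * f₁ a) := by
    intro v hv
    obtain ⟨t, ht⟩ := Submodule.mem_span_singleton.1 hv
    refine ⟨t, ht.symm, ?_⟩
    rw [hfval, ← ht, map_smul, map_smul, smul_eq_mul, smul_eq_mul, hha]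
    ring
  refine ⟨f, ?_, ?_, ?_⟩
  · -- nonvanishing on Φ
    intro v hv
    by_cases hvs : v ∈ Submodule.span ℝ {a}
    · obtain ⟨t, hvt, hfv⟩ := keyspan v hvs
      have ht0 : t ≠ 0 := by
        rintro rfl; rw [zero_smul] at hvt; exact hΦ0 (hvt ▸ hv)
      rw [hfv]
      exact mul_ne_zero ht0 (ne_of_gt hεa)
    · have h0 : h v ≠ 0 := hhne' v hv hvs
      rcases lt_or_gt_of_ne h0 with hlt | hgt
      · have := key2 v hv hlt
        intro h0'; rw [h0'] at this; linarith
      · have := key1 v hv hgt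
        intro h0'; rw [h0'] at this; linarith
  · -- positive systems agree on Φ₁
    have fwd : ∀ v ∈ Φ₁, 0 < f₁ v → 0 < f v := by
      intro v hv hf1v
      by_cases hvs : v ∈ Submodule.span ℝ {a}
      · obtain ⟨t, hvt, hfv⟩ := keyspan v hvs
        have htpos : 0 < t := by
          have e : f₁ v = t * f₁ a := by rw [hvt, map_smul, smul_eq_mul]
          nlinarith
        rw [hfv]
        exact mul_pos htpos hεa
      · have hp := hhpos v hv hf1v hvs
        have := key1 v (hsub hv) hp
        linarith
    ext v
    simp only [Set.mem_setOf_eq]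
    constructor
    · rintro ⟨hv, hfv⟩
      refine ⟨hv, ?_⟩
      by_contra hcon
      have hlt : f₁ v < 0 := lt_of_le_of_ne (not_lt.1 hcon) (hf₁ v hv)
      have hnegv : 0 < f₁ (-v) := by rw [map_neg]; linarith
      have := fwd (-v) (hneg1 v hv) hnegv
      rw [map_neg] at this
      linarith
    · rintro ⟨hv, hfv⟩
      exact ⟨hv, fwd v hv hfv⟩
  · -- simplicity of a or a/2
    have hsmall : ∀ b ∈ Φ, 0 < f b → f b < ε * f₁ a →
        ∃ t : ℝ, b = t • a ∧ (t = 1 / 2 ∨ t = 1 ∨ t = 2) := by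
      intro b hb hfb hlt
      by_cases hbs : b ∈ Submodule.span ℝ {a}
      · obtain ⟨t, hbt, hfv⟩ := keyspan b hbs
        have htpos : 0 < t := by
          rw [hfv] at hfb
          nlinarith
        refine ⟨t, hbt, ?_⟩
        rcases hmult b hb t hbt with h | h | h | h | h | h
        · exact Or.inl h
        · exact Or.inr (Or.inl h)
        · exact Or.inr (Or.inr h)
        · exfalso; rw [h] at htpos; norm_num at htpos
        · exfalso; rw [h] at htpos; norm_num at htpos
        · exfalso; rw [h] at htpos; norm_num at htpos
      · exfalso
        have h0 : h b ≠ 0 := hhne' b hb hbs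
        rcases lt_or_gt_of_ne h0 with hl | hg
        · have := key2 b hb hl; linarith
        · have := key1 b hb hg; linarith
    have hfa : f a = ε * f₁ a := by rw [hfval, hha]; ring
    by_cases hhalf : (2 : ℝ)⁻¹ • a ∈ Φ
    · right
      refine ⟨hhalf, ?_⟩
      rintro ⟨b, ⟨hbΦ, hbpos⟩, c, ⟨hcΦ, hcpos⟩, heq⟩
      have hfha : f ((2 : ℝ)⁻¹ • a) = 2⁻¹ * (ε * f₁ a) := by
        rw [map_smul, smul_eq_mul, hfval, hha]; ring
      have hsum : f b + f c = 2⁻¹ * (ε * f₁ a) := by rw [← hfha, heq, map_add]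
      obtain ⟨tb, hbt, htb⟩ := hsmall b hbΦ hbpos (by nlinarith)
      obtain ⟨tc, hct, htc⟩ := hsmall c hcΦ hcpos (by nlinarith)
      have hts : tb + tc = 2⁻¹ := by
        have e : (tb + tc) • a = ((2 : ℝ)⁻¹ : ℝ) • a := by
          rw [add_smul, ← hbt, ← hct, ← heq]
        have e2 : ((tb + tc) - 2⁻¹) • a = 0 := by rw [sub_smul, e, sub_self]
        rcases smul_eq_zero.1 e2 with h' | h'
        · linarith [sub_eq_zero.1 (by linarith [h'] : (tb + tc) - 2⁻¹ = 0)]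
        · exact absurd h' ha0
      rcases htb with rfl | rfl | rfl <;> rcases htc with rfl | rfl | rfl <;> norm_num at hts
    · left
      rintro ⟨b, ⟨hbΦ, hbpos⟩, c, ⟨hcΦ, hcpos⟩, heq⟩
      have hsum : f b + f c = ε * f₁ a := by rw [← hfa, heq, map_add]
      obtain ⟨tb, hbt, htb⟩ := hsmall b hbΦ hbpos (by linarith)
      obtain ⟨tc, hct, htc⟩ := hsmall c hcΦ hcpos (by linarith)
      have hts : tb + tc = 1 := by
        have e : (tb + tc) • a = (1 : ℝ) • a := by
          rw [add_smul, ← hbt, ← hct, ← heq, one_smul]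
        have e2 : ((tb + tc) - 1) • a = 0 := by rw [sub_smul, e, sub_self]
        rcases smul_eq_zero.1 e2 with h' | h'
        · linarith [sub_eq_zero.1 (by linarith [h'] : (tb + tc) - 1 = 0)]
        · exact absurd h' ha0
      rcases htb with rfl | rfl | rfl <;> rcases htc with rfl | rfl | rfl <;>
        first
          | (apply hhalf
             have e : b = (2 : ℝ)⁻¹ • a := by rw [hbt]; norm_num
             exact e ▸ hbΦ)
          | norm_num at hts
end

section
/- Let k be a field, V a nonzero finite-dimensional k-vector space, and b : V × V → k a nondegenerate bilinear form (i.e. b(x,y) = 0 for all y implies x = 0, and b(x,y) = 0 for all x implies y = 0). Suppose c ∈ k satisfies b(x,y) = c·b(y,x) for all x, y ∈ V. Then c² = 1; and if the dimension of V is odd, then c = 1, so that b is symmetric. -/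
/-- Let `k` be a field, `V` a nonzero finite-dimensional `k`-vector space, and
`b` a nondegenerate bilinear form on `V`.  If `c ∈ k` satisfies `b x y = c * b y x` for all
`x y`, then `c ^ 2 = 1`; and if the dimension of `V` is odd, then `c = 1`, so that `b` is
symmetric. -/
theorem statement5 {k V : Type*} [Field k] [AddCommGroup V] [Module k V]
    [FiniteDimensional k V] [Nontrivial V]
    (b : V →ₗ[k] V →ₗ[k] k)
    (hnd_left : ∀ x : V, (∀ y : V, b x y = 0) → x = 0)
    (hnd_right : ∀ y : V, (∀ x : V, b x y = 0) → y = 0)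
    (c : k) (hc : ∀ x y : V, b x y = c * b y x) :
    c ^ 2 = 1 ∧ (Odd (Module.finrank k V) → c = 1 ∧ ∀ x y : V, b x y = b y x) := by
  -- c ^ 2 = 1
  obtain ⟨x, hx⟩ := exists_ne (0 : V)
  have hy : ∃ y, b x y ≠ 0 := by
    by_contra h
    push_neg at h
    exact hx (hnd_left x h)
  obtain ⟨y, hxy⟩ := hy
  have h1 : b x y = c ^ 2 * b x y := by
    calc b x y = c * b y x := hc x y
    _ = c * (c * b x y) := by rw [← hc y x]
    _ = c ^ 2 * b x y := by ring
  have hc2 : c ^ 2 = 1 := by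
    have := mul_right_cancel₀ hxy (h1.symm.trans (one_mul (b x y)).symm)
    exact this
  refine ⟨hc2, fun hodd => ?_⟩
  -- matrix argument: c ^ n = 1
  set n := Module.finrank k V
  let e := Module.finBasis k V
  set M := LinearMap.BilinForm.toMatrix e b with hM
  have hnd : M.det ≠ 0 := by
    rw [← LinearMap.BilinForm.nondegenerate_iff_det_ne_zero e]
    exact ⟨hnd_left, hnd_right⟩
  have hMT : M = c • M.transpose := by
    ext i j
    simp only [Matrix.smul_apply, Matrix.transpose_apply, hM,
      LinearMap.BilinForm.toMatrix_apply, smul_eq_mul]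
    exact hc _ _
  have hdet : M.det = c ^ n * M.det := by
    conv_lhs => rw [hMT]
    rw [Matrix.det_smul, Matrix.det_transpose]
    simp [n]
  have hcn : c ^ n = 1 := by
    have := mul_right_cancel₀ hnd (hdet.symm.trans (one_mul M.det).symm)
    exact this
  obtain ⟨m, hm⟩ := hodd
  have hc1 : c = 1 := by
    have : c ^ n = (c ^ 2) ^ m * c := by rw [hm]; ring
    rw [hc2, one_pow, one_mul] at this
    rw [← this, hcn]
  exact ⟨hc1, fun x y => by rw [hc x y, hc1, one_mul]⟩
end

section
/- Let k be a field of characteristic 2, let n ≥ 0, let V be a k-vector space with a direct sum decomposition V = L₀ ⊕ L₁ ⊕ ⋯ ⊕ Lₙ into one-dimensional subspaces, and let b be a nondegenerate symmetric bilinear form on V such that b(Lᵢ, Lⱼ) = 0 whenever i + j ≠ n. Then: (a) the set K := {x ∈ V : b(x,x) = 0} equals the linear subspace ⊕_{i : 2i ≠ n} Lᵢ, and the restriction of b to K is a nondegenerate alternating form; (b) the b-orthogonal complement K^⊥ equals {0} if n is odd and equals L_{n/2} if n is even, and the restriction of b to K^⊥ is nondegenerate; in particular, if n is odd then b is alternating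 on all of V. -/
set_option maxHeartbeats 1000000


/-- Let `k` be a field of characteristic 2, `V = L₀ ⊕ ⋯ ⊕ Lₙ` a direct sum of
one-dimensional subspaces, and `b` a nondegenerate symmetric bilinear form with
`b(Lᵢ, Lⱼ) = 0` whenever `i + j ≠ n`.  Then `K := {x | b x x = 0}` equals the subspace
`⊕_{2i ≠ n} Lᵢ` and `b` restricts to a nondegenerate alternating form on `K`; moreover `K^⊥` is
`0` when `n` is odd and `L_{n/2}` when `n` is even, `b` restricts nondegenerately to `K^⊥`, and
if `n` is odd then `b` is alternating on all of `V`. -/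
theorem statement6 {k V : Type*} [Field k] [CharP k 2] [AddCommGroup V] [Module k V]
    (n : ℕ) (L : Fin (n + 1) → Submodule k V)
    (hinternal : DirectSum.IsInternal L)
    (hdim : ∀ i, Module.finrank k ↥(L i) = 1)
    (b : V →ₗ[k] V →ₗ[k] k)
    (hsymm : ∀ x y : V, b x y = b y x)
    (hnd : ∀ x : V, (∀ y : V, b x y = 0) → x = 0)
    (horth : ∀ i j : Fin (n + 1), (i : ℕ) + (j : ℕ) ≠ n →
      ∀ x ∈ L i, ∀ y ∈ L j, b x y = 0) :
    -- (a) `K = ⊕_{2i ≠ n} Lᵢ`, and `b` restricted to `K` is nondegenerate and alternating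
    ({x : V | b x x = 0} = ↑(⨆ i ∈ {i : Fin (n + 1) | 2 * (i : ℕ) ≠ n}, L i)) ∧
    (∀ x ∈ {x : V | b x x = 0}, b x x = 0) ∧
    (∀ x ∈ {x : V | b x x = 0}, (∀ y ∈ {x : V | b x x = 0}, b x y = 0) → x = 0) ∧
    -- (b) `K^⊥` is trivial for odd `n` and equals `L_{n/2}` for even `n`, and `b` restricted
    -- to `K^⊥` is nondegenerate; if `n` is odd then `b` is alternating on `V`
    (Odd n → {x : V | ∀ u ∈ {z : V | b z z = 0}, b x u = 0} = {(0 : V)}) ∧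
    (n % 2 = 0 → {x : V | ∀ u ∈ {z : V | b z z = 0}, b x u = 0} =
      ↑(L ⟨n / 2, Nat.lt_succ_of_le (Nat.div_le_self n 2)⟩)) ∧
    (∀ x ∈ {x : V | ∀ u ∈ {z : V | b z z = 0}, b x u = 0},
      (∀ y ∈ {x : V | ∀ u ∈ {z : V | b z z = 0}, b x u = 0}, b x y = 0) → x = 0) ∧
    (Odd n → ∀ x : V, b x x = 0) := by
  classical
  have hle : ∀ i : Fin (n + 1), (i : ℕ) ≤ n := fun i => Nat.lt_succ_iff.mp i.isLt
  have h2 : ∀ a : k, a + a = 0 := by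
    intro a
    have h : (2 : k) = 0 := by exact_mod_cast CharP.cast_eq_zero k 2
    calc a + a = 2 * a := by ring
    _ = 0 := by rw [h, zero_mul]
  -- decomposition existence
  have hdec : ∀ x : V, ∃ c : ∀ i, ↥(L i), x = ∑ i, ((c i : V)) := by
    intro x
    have hx : x ∈ ⨆ i, L i := by rw [hinternal.submodule_iSup_eq_top]; trivial
    refine Submodule.iSup_induction (motive := fun z => ∃ c : ∀ i, ↥(L i), z = ∑ i, ((c i : V)))
      L hx ?_ ⟨0, by simp⟩ ?_
    · intro i y hy
      refine ⟨Pi.single i ⟨y, hy⟩, ?_⟩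
      rw [Finset.sum_eq_single i (fun j _ hj => by rw [Pi.single_eq_of_ne hj]; rfl)
        (fun h => absurd (Finset.mem_univ i) h)]
      rw [Pi.single_eq_same]
    · rintro y z ⟨c, rfl⟩ ⟨d, rfl⟩
      exact ⟨c + d, by simp [Finset.sum_add_distrib]⟩
  set dual : Fin (n + 1) → Fin (n + 1) := fun i => ⟨n - i, by omega⟩ with hdualdef
  have hdualval : ∀ i : Fin (n + 1), (dual i : ℕ) = n - i := fun i => rfl
  -- component extraction
  have hcomp : ∀ (c : ∀ i, ↥(L i)) (i₀ : Fin (n + 1)) (y : V), y ∈ L (dual i₀) →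
      b (∑ i, ((c i : V))) y = b (c i₀) y := by
    intro c i₀ y hy
    rw [map_sum, LinearMap.sum_apply]
    refine Finset.sum_eq_single i₀ ?_ (fun h => absurd (Finset.mem_univ i₀) h)
    intro j _ hj
    refine horth j (dual i₀) ?_ _ (c j).2 y hy
    have hji : (j : ℕ) ≠ (i₀ : ℕ) := fun h => hj (Fin.ext h)
    have := hle i₀; have := hle j
    rw [hdualval]; omega
  -- pairing nondegeneracy between L i and L (dual i)
  have hpair : ∀ (i : Fin (n + 1)) (x : V), x ∈ L i →
      (∀ y ∈ L (dual i), b x y = 0) → x = 0 := by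
    intro i x hx h0
    apply hnd
    intro y
    obtain ⟨d, rfl⟩ := hdec y
    rw [map_sum]
    refine Finset.sum_eq_zero ?_
    intro j _
    by_cases hji : j = dual i
    · exact h0 _ (hji ▸ (d j).2)
    · refine horth i j ?_ x hx _ (d j).2
      have hji' : (j : ℕ) ≠ (dual i : ℕ) := fun h => hji (Fin.ext h)
      have := hle i; have := hle j
      rw [hdualval] at hji'; omega
  -- one-dimensionality: nonzero elements span
  have hspan : ∀ (i : Fin (n + 1)) (x : V), x ∈ L i → x ≠ 0 →
      ∀ y ∈ L i, ∃ a : k, y = a • x := by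
    intro i x hx hx0 y hy
    have h1 : (⟨x, hx⟩ : ↥(L i)) ≠ 0 := fun h => hx0 (by simpa using congrArg Subtype.val h)
    obtain ⟨a, ha⟩ := (finrank_eq_one_iff_of_nonzero' (⟨x, hx⟩ : ↥(L i)) h1).mp (hdim i) ⟨y, hy⟩
    exact ⟨a, by simpa using (congrArg Subtype.val ha).symm⟩
  -- on the middle piece, b x x = 0 forces x = 0
  have hself : ∀ (i : Fin (n + 1)), 2 * (i : ℕ) = n → ∀ x ∈ L i, b x x = 0 → x = 0 := by
    intro i hi x hx hbx
    have hdi : dual i = i := Fin.ext (by rw [hdualval]; omega)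
    by_cases hx0 : x = 0
    · exact hx0
    · refine hpair i x hx fun y hy => ?_
      rw [hdi] at hy
      obtain ⟨a, rfl⟩ := hspan i x hx hx0 y hy
      rw [map_smul, smul_eq_mul, hbx, mul_zero]
  -- the quadratic form is additive
  have hq : ∀ x y : V, b (x + y) (x + y) = b x x + b y y := by
    intro x y
    have h : b (x + y) (x + y) = b x x + (b x y + b y x) + b y y := by
      simp only [map_add, LinearMap.add_apply]; ring
    rw [h, hsymm x y, h2 (b y x), add_zero]
  have hqsum : ∀ c : ∀ i, ↥(L i), b (∑ i, ((c i : V))) (∑ i, ((c i : V)))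
      = ∑ i, b ((c i : V)) ((c i : V)) :=
    fun c => map_sum (AddMonoidHom.mk' (fun x => b x x) hq) (fun i => ((c i : V))) Finset.univ
  have hdiag : ∀ (c : ∀ i, ↥(L i)) (i : Fin (n + 1)), 2 * (i : ℕ) ≠ n →
      b ((c i : V)) (c i) = 0 :=
    fun c i hi => horth i i (by omega) _ (c i).2 _ (c i).2
  -- middle component vanishes on K
  have hKzero : ∀ (i : Fin (n + 1)), 2 * (i : ℕ) = n → ∀ c : ∀ j, ↥(L j),
      b (∑ j, ((c j : V))) (∑ j, ((c j : V))) = 0 → ((c i : V)) = 0 := by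
    intro i hi c hc
    rw [hqsum] at hc
    have h1 : ∑ j, b ((c j : V)) (c j) = b ((c i : V)) (c i) := by
      refine Finset.sum_eq_single i ?_ (fun h => absurd (Finset.mem_univ i) h)
      intro j _ hj
      refine hdiag c j fun h => hj (Fin.ext ?_)
      omega
    rw [h1] at hc
    exact hself i hi _ (c i).2 hc
  -- alternating for odd n (claim 7)
  have g7 : Odd n → ∀ x : V, b x x = 0 := by
    rintro ⟨t, ht⟩ x
    obtain ⟨c, rfl⟩ := hdec x
    rw [hqsum]
    exact Finset.sum_eq_zero fun i _ => hdiag c i (by omega)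
  -- claim 1
  have g1 : {x : V | b x x = 0} = ↑(⨆ i ∈ {i : Fin (n + 1) | 2 * (i : ℕ) ≠ n}, L i) := by
    ext x
    simp only [Set.mem_setOf_eq, SetLike.mem_coe]
    constructor
    · intro hx
      obtain ⟨c, rfl⟩ := hdec x
      refine Submodule.sum_mem _ fun i _ => ?_
      by_cases hi : 2 * (i : ℕ) = n
      · rw [hKzero i hi c hx]; exact Submodule.zero_mem _
      · exact Submodule.mem_iSup_of_mem i (Submodule.mem_iSup_of_mem hi (c i).2)
    · intro hx
      refine Submodule.iSup_induction (motive := fun z : V => b z z = 0)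
        (fun i => ⨆ _ : i ∈ {i : Fin (n + 1) | 2 * (i : ℕ) ≠ n}, L i) hx ?_ (by simp) ?_
      · intro i z hz
        have hz' : z ∈ ⨆ _ : i ∈ {i : Fin (n + 1) | 2 * (i : ℕ) ≠ n}, L i := hz
        by_cases hi : i ∈ {i : Fin (n + 1) | 2 * (i : ℕ) ≠ n}
        · rw [iSup_pos hi] at hz'
          exact horth i i (by simp only [Set.mem_setOf_eq] at hi; omega) z hz' z hz'
        · rw [iSup_neg hi, Submodule.mem_bot] at hz'
          rw [hz']; simp
      · intro y z hy hz
        rw [hq, hy, hz, add_zero]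
  have g3 : ∀ x ∈ {x : V | b x x = 0},
      (∀ y ∈ {x : V | b x x = 0}, b x y = 0) → x = 0 := by
    intro x hx hperp
    obtain ⟨c, rfl⟩ := hdec x
    have hz : ∀ i, ((c i : V)) = 0 := by
      intro i
      by_cases hi : 2 * (i : ℕ) = n
      · exact hKzero i hi c hx
      · refine hpair i _ (c i).2 fun y hy => ?_
        have hyK : b y y = 0 := by
          refine horth (dual i) (dual i) ?_ y hy y hy
          have := hle i; rw [hdualval]; omega
        rw [← hcomp c i y hy]
        exact hperp y hyK
    rw [Finset.sum_eq_zero fun i _ => hz i]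
  have g4 : Odd n → {x : V | ∀ u ∈ {z : V | b z z = 0}, b x u = 0} = {(0 : V)} := by
    intro hodd
    ext x
    simp only [Set.mem_setOf_eq, Set.mem_singleton_iff]
    constructor
    · intro hx
      exact hnd x fun y => hx y (g7 hodd y)
    · rintro rfl u _; simp
  have g5 : n % 2 = 0 → {x : V | ∀ u ∈ {z : V | b z z = 0}, b x u = 0} =
      ↑(L ⟨n / 2, Nat.lt_succ_of_le (Nat.div_le_self n 2)⟩) := by
    intro hn2
    set m : Fin (n + 1) := ⟨n / 2, Nat.lt_succ_of_le (Nat.div_le_self n 2)⟩ with hmdef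
    have hm : 2 * (m : ℕ) = n := by simp only [hmdef]; omega
    have hdm : dual m = m := Fin.ext (by rw [hdualval]; omega)
    ext x
    simp only [Set.mem_setOf_eq, SetLike.mem_coe]
    constructor
    · intro hx
      obtain ⟨c, rfl⟩ := hdec x
      have hz : ∀ i, i ≠ m → ((c i : V)) = 0 := by
        intro i hi
        have h2i : 2 * (i : ℕ) ≠ n := fun h => hi (Fin.ext (by omega))
        refine hpair i _ (c i).2 fun y hy => ?_
        have hyK : b y y = 0 := by
          refine horth (dual i) (dual i) ?_ y hy y hy
          have := hle i; rw [hdualval]; omega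
        rw [← hcomp c i y hy]
        exact hx y hyK
      have hsum : ∑ i, ((c i : V)) = ((c m : V)) :=
        Finset.sum_eq_single m (fun i _ hi => hz i hi) (fun h => absurd (Finset.mem_univ m) h)
      rw [hsum]
      exact (c m).2
    · intro hx u hu
      obtain ⟨d, rfl⟩ := hdec u
      rw [hsymm, hcomp d m x (by rw [hdm]; exact hx), hKzero m hm d hu]
      simp
  have g6 : ∀ x ∈ {x : V | ∀ u ∈ {z : V | b z z = 0}, b x u = 0},
      (∀ y ∈ {x : V | ∀ u ∈ {z : V | b z z = 0}, b x u = 0}, b x y = 0) → x = 0 := by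
    intro x hx hperp
    rcases Nat.even_or_odd n with he | ho
    · have hn2 : n % 2 = 0 := Nat.even_iff.mp he
      rw [g5 hn2] at hx hperp
      set m : Fin (n + 1) := ⟨n / 2, Nat.lt_succ_of_le (Nat.div_le_self n 2)⟩ with hmdef
      have hm : 2 * (m : ℕ) = n := by simp only [hmdef]; omega
      have hdm : dual m = m := Fin.ext (by rw [hdualval]; omega)
      exact hpair m x hx fun y hy => hperp y (by rw [hdm] at hy; exact hy)
    · rw [g4 ho] at hx
      exact hx
  exact ⟨g1, fun x hx => hx, g3, g4, g5, g6, g7⟩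
end

section
/- Let k be a field of characteristic 2, V a finite-dimensional k-vector space, and b a nondegenerate symmetric bilinear form on V. Put K := {x ∈ V : b(x,x) = 0}, and assume that K is a k-linear subspace of V, that K ∩ K^⊥ = {0}, and that dim K^⊥ ≤ 1. Then the restriction of b to K is a nondegenerate alternating form; every isometry g of (V, b) (i.e. linear automorphism with b(gx, gy) = b(x,y) for all x,y) preserves K, preserves K^⊥, and fixes K^⊥ pointwise; and the restriction map g ↦ g|_K is a group isomorphism from the group of isometries of (V, b) onto the group of isometries of (K, b|_K) (the symplectic group of (K, b|_K)). -/
/-- The orthogonal complement `U^⊥ = {x : V | b (x, u) = 0 for all u ∈ U}` of a submodule `U`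
with respect to a bilinear form `b`. -/
def perp {k V : Type*} [Field k] [AddCommGroup V] [Module k V]
    (b : V →ₗ[k] V →ₗ[k] k) (U : Submodule k V) : Submodule k V where
  carrier := {x : V | ∀ u ∈ U, b x u = 0}
  add_mem' := by
    intro x y hx hy
    simp only [Set.mem_setOf_eq] at *
    intro u hu
    rw [map_add, LinearMap.add_apply, hx u hu, hy u hu, add_zero]
  zero_mem' := by
    simp only [Set.mem_setOf_eq]
    intro u hu
    simp
  smul_mem' := by
    intro c x hx
    simp only [Set.mem_setOf_eq] at *
    intro u hu
    rw [map_smul, LinearMap.smul_apply, hx u hu, smul_zero]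

/-- The restriction of a bilinear form `b` on `V` to a submodule `K`. -/
def restrictForm {k V : Type*} [Field k] [AddCommGroup V] [Module k V]
    (b : V →ₗ[k] V →ₗ[k] k) (K : Submodule k V) : ↥K →ₗ[k] ↥K →ₗ[k] k :=
  LinearMap.mk₂ k (fun x y : K => b x y)
    (fun m₁ m₂ n => by simp)
    (fun c m n => by simp)
    (fun m n₁ n₂ => by simp)
    (fun c m n => by simp)

/-- The isometry group of a bilinear form `b` on `V`, as a subgroup of the group of linear
automorphisms of `V`. -/
def isomGroup {k V : Type*} [Field k] [AddCommGroup V] [Module k V]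
    (b : V →ₗ[k] V →ₗ[k] k) : Subgroup ((V →ₗ[k] V)ˣ) where
  carrier := {g : (V →ₗ[k] V)ˣ |
    ∀ x y : V, b ((g : V →ₗ[k] V) x) ((g : V →ₗ[k] V) y) = b x y}
  one_mem' := by
    simp only [Set.mem_setOf_eq]
    intro x y
    simp
  mul_mem' := by
    intro g h hg hh
    simp only [Set.mem_setOf_eq] at *
    intro x y
    rw [Units.val_mul, Module.End.mul_apply, Module.End.mul_apply, hg, hh]
  inv_mem' := by
    intro g hg
    simp only [Set.mem_setOf_eq] at *
    intro x y
    have h1 : ∀ z : V, (g : V →ₗ[k] V) ((↑g⁻¹ : V →ₗ[k] V) z) = z := by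
      intro z
      have h2 : ((↑g * ↑g⁻¹ : V →ₗ[k] V)) z = (1 : V →ₗ[k] V) z := by rw [g.mul_inv]
      rwa [Module.End.mul_apply, Module.End.one_apply] at h2
    calc b ((↑g⁻¹ : V →ₗ[k] V) x) ((↑g⁻¹ : V →ₗ[k] V) y)
        = b ((g : V →ₗ[k] V) ((↑g⁻¹ : V →ₗ[k] V) x))
            ((g : V →ₗ[k] V) ((↑g⁻¹ : V →ₗ[k] V) y)) := (hg _ _).symm
      _ = b x y := by rw [h1, h1]

/-- Let `k` be a field of characteristic `2`, `V` a finite-dimensional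
`k`-vector space, and `b` a nondegenerate symmetric bilinear form on `V`.  Put
`K = {x | b x x = 0}`, and assume `K` is a linear subspace, `K ∩ K^⊥ = 0`, and `dim K^⊥ ≤ 1`.
Then the restriction of `b` to `K` is a nondegenerate alternating form; every isometry of
`(V, b)` preserves `K` and `K^⊥` and fixes `K^⊥` pointwise; and restriction to `K` is a group
isomorphism from the isometry group of `(V, b)` onto the symplectic group of `(K, b|_K)`. -/
theorem statement7 {k V : Type*} [Field k] [CharP k 2] [AddCommGroup V] [Module k V]
    [FiniteDimensional k V]
    (b : V →ₗ[k] V →ₗ[k] k)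
    (hsymm : ∀ x y : V, b x y = b y x)
    (hnd : ∀ x : V, (∀ y : V, b x y = 0) → x = 0)
    (K : Submodule k V) (hK : (K : Set V) = {x : V | b x x = 0})
    (hint : K ⊓ perp b K = ⊥)
    (hdim : Module.finrank k ↥(perp b K) ≤ 1) :
    ((∀ x : K, restrictForm b K x x = 0) ∧
      (∀ x : K, (∀ y : K, restrictForm b K x y = 0) → x = 0)) ∧
    (∀ g : (V →ₗ[k] V)ˣ, g ∈ isomGroup b →
      (∀ x ∈ K, (g : V →ₗ[k] V) x ∈ K) ∧
      (∀ x ∈ perp b K, (g : V →ₗ[k] V) x ∈ perp b K) ∧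
      (∀ x ∈ perp b K, (g : V →ₗ[k] V) x = x)) ∧
    (∃ e : ↥(isomGroup b) ≃* ↥(isomGroup (restrictForm b K)),
      ∀ (g : ↥(isomGroup b)) (x : K),
        ((((e g : (↥K →ₗ[k] ↥K)ˣ) : ↥K →ₗ[k] ↥K) x : V) =
          ((g : (V →ₗ[k] V)ˣ) : V →ₗ[k] V) (x : V))) := by
  classical
  have hKmem : ∀ x : V, x ∈ K ↔ b x x = 0 := fun x => by
    rw [← SetLike.mem_coe, hK]; rfl
  have hres : ∀ x y : K, restrictForm b K x y = b (x : V) (y : V) := fun _ _ => rfl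
  -- Part 1
  have halt : ∀ x : K, restrictForm b K x x = 0 := fun x => by
    rw [hres]; exact (hKmem x).mp x.2
  have hndK : ∀ x : K, (∀ y : K, restrictForm b K x y = 0) → x = 0 := by
    intro x hx
    have hxP : (x : V) ∈ perp b K := fun u hu => by
      have := hx ⟨u, hu⟩; rwa [hres] at this
    have hmem : (x : V) ∈ K ⊓ perp b K := ⟨x.2, hxP⟩
    rw [hint] at hmem
    exact Subtype.ext hmem
  -- Part 2 helpers
  have hginv_apply : ∀ (g : (V →ₗ[k] V)ˣ) (v : V),
      (g : V →ₗ[k] V) ((↑g⁻¹ : V →ₗ[k] V) v) = v := by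
    intro g v
    have h2 := congrArg (fun f : V →ₗ[k] V => f v) g.mul_inv
    simpa only [Module.End.mul_apply, Module.End.one_apply] using h2
  have hgK : ∀ g ∈ isomGroup b, ∀ x ∈ K, (g : V →ₗ[k] V) x ∈ K := by
    intro g hg x hx
    rw [hKmem, hg x x]
    exact (hKmem x).mp hx
  have hgP : ∀ g ∈ isomGroup b, ∀ x ∈ perp b K, (g : V →ₗ[k] V) x ∈ perp b K := by
    intro g hg x hx u hu
    have hginvK : (↑g⁻¹ : V →ₗ[k] V) u ∈ K := hgK g⁻¹ (inv_mem hg) u hu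
    calc b ((g : V →ₗ[k] V) x) u
        = b ((g : V →ₗ[k] V) x) ((g : V →ₗ[k] V) ((↑g⁻¹ : V →ₗ[k] V) u)) := by
          rw [hginv_apply]
      _ = b x ((↑g⁻¹ : V →ₗ[k] V) u) := hg _ _
      _ = 0 := hx _ hginvK
  have h11 : (1 : k) + 1 = 0 := by
    have h2 := CharP.cast_eq_zero k 2
    push_cast at h2
    linear_combination h2
  have hfix : ∀ g ∈ isomGroup b, ∀ x ∈ perp b K, (g : V →ₗ[k] V) x = x := by
    intro g hg x hx
    by_cases hx0 : x = 0
    · simp [hx0]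
    · have hxP : (⟨x, hx⟩ : ↥(perp b K)) ≠ 0 := by
        simp [Subtype.ext_iff, hx0]
      have hspan : Submodule.span k {(⟨x, hx⟩ : ↥(perp b K))} = ⊤ := by
        apply Submodule.eq_top_of_finrank_eq
        have h1 : Module.finrank k
            ↥(Submodule.span k {(⟨x, hx⟩ : ↥(perp b K))}) = 1 :=
          finrank_span_singleton hxP
        have h2 : 1 ≤ Module.finrank k ↥(perp b K) :=
          h1 ▸ Submodule.finrank_le _
        omega
      have hgxP : (g : V →ₗ[k] V) x ∈ perp b K := hgP g hg x hx
      have hmem2 : (⟨(g : V →ₗ[k] V) x, hgxP⟩ : ↥(perp b K)) ∈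
          Submodule.span k {(⟨x, hx⟩ : ↥(perp b K))} := by
        rw [hspan]; exact Submodule.mem_top
      obtain ⟨c, hc⟩ := Submodule.mem_span_singleton.mp hmem2
      have hc' : (g : V →ₗ[k] V) x = c • x := by
        have := congrArg (Subtype.val) hc
        simpa using this.symm
      have hbxx : b x x ≠ 0 := by
        intro h0
        have hmem : x ∈ K ⊓ perp b K := ⟨(hKmem x).mpr h0, hx⟩
        rw [hint] at hmem
        exact hx0 hmem
      have h2 : c * (c * b x x) = b x x := by
        have hgx := hg x x
        rw [hc'] at hgx
        simpa using hgx
      have hcc : c * c = 1 := by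
        have h2' : c * c * b x x = 1 * b x x := by rw [one_mul]; linear_combination h2
        exact mul_right_cancel₀ hbxx h2'
      have hc1 : (c + 1) * (c + 1) = 0 := by
        linear_combination hcc + (c + 1) * h11
      have hc2 : c = -1 := eq_neg_of_add_eq_zero_left (mul_self_eq_zero.mp hc1)
      have hxx : x + x = 0 := by
        have h3 : ((1 : k) + 1) • x = 0 := by rw [h11, zero_smul]
        rw [add_smul, one_smul] at h3
        exact h3
      rw [hc', hc2, neg_smul, one_smul]
      exact neg_eq_of_add_eq_zero_left hxx
  -- IsCompl
  have hrefl : LinearMap.BilinForm.IsRefl b := fun x y h => by rw [hsymm]; exact h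
  have horth : LinearMap.BilinForm.orthogonal b K = perp b K := by
    ext x
    rw [LinearMap.BilinForm.mem_orthogonal_iff]
    constructor
    · intro h u hu
      rw [hsymm]
      exact h u hu
    · intro h u hu
      show b u x = 0
      rw [hsymm]
      exact h u hu
  have hcompl : IsCompl K (perp b K) := by
    rw [← horth]
    refine (LinearMap.BilinForm.isCompl_orthogonal_iff_disjoint hrefl).mpr ?_
    rw [horth, disjoint_iff]
    exact hint
  have hdecomp : ∀ v : V, ∃ (a : ↥K) (c : ↥(perp b K)), v = ↑a + ↑c := by
    intro v
    have hv : v ∈ K ⊔ perp b K := by rw [hcompl.sup_eq_top]; exact Submodule.mem_top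
    obtain ⟨a, ha, c, hc, h⟩ := Submodule.mem_sup.mp hv
    exact ⟨⟨a, ha⟩, ⟨c, hc⟩, h.symm⟩
  have hcross : ∀ (a : ↥K) (c : ↥(perp b K)), b ↑a ↑c = 0 ∧ b ↑c ↑a = 0 := by
    intro a c
    have h1 : b ↑c ↑a = 0 := c.2 ↑a a.2
    exact ⟨by rw [hsymm]; exact h1, h1⟩
  -- The restriction homomorphism
  have hresK : ∀ (g : ↥(isomGroup b)), ∀ x ∈ K,
      ((g : (V →ₗ[k] V)ˣ) : V →ₗ[k] V) x ∈ K := fun g => hgK g.1 g.2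
  let ρ : ↥(isomGroup b) → ↥(isomGroup (restrictForm b K)) := fun g =>
    ⟨⟨LinearMap.restrict ((g : (V →ₗ[k] V)ˣ) : V →ₗ[k] V) (hresK g),
      LinearMap.restrict (((g⁻¹ : ↥(isomGroup b)) : (V →ₗ[k] V)ˣ) : V →ₗ[k] V) (hresK g⁻¹),
      by
        ext x
        simp only [Module.End.mul_apply, LinearMap.restrict_apply, Module.End.one_apply]
        exact hginv_apply g.1 ↑x,
      by
        ext x
        simp only [Module.End.mul_apply, LinearMap.restrict_apply, Module.End.one_apply]
        have h2 := congrArg (fun f : V →ₗ[k] V => f (x : V)) (g.1).inv_mul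
        simpa only [Module.End.mul_apply, Module.End.one_apply, Subgroup.coe_inv] using h2⟩,
      by
        intro x y
        rw [hres, hres]
        simpa [LinearMap.restrict_apply] using g.2 ↑x ↑y⟩
  have hρmul : ∀ g h : ↥(isomGroup b), ρ (g * h) = ρ g * ρ h := by
    intro g h
    apply Subtype.ext
    apply Units.ext
    ext x
    simp [ρ, LinearMap.restrict_apply, Module.End.mul_apply]
  let φ : ↥(isomGroup b) →* ↥(isomGroup (restrictForm b K)) := MonoidHom.mk' ρ hρmul
  have hinj : Function.Injective φ := by
    rw [injective_iff_map_eq_one]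
    intro g hg1
    have hKfix : ∀ x ∈ K, ((g : (V →ₗ[k] V)ˣ) : V →ₗ[k] V) x = x := by
      intro x hx
      have h2 := congrArg
        (fun u : ↥(isomGroup (restrictForm b K)) =>
          (((u : (↥K →ₗ[k] ↥K)ˣ) : ↥K →ₗ[k] ↥K) ⟨x, hx⟩ : V)) hg1
      simpa [φ, ρ, LinearMap.restrict_apply] using h2
    have hPfix := hfix g.1 g.2
    apply Subtype.ext
    apply Units.ext
    ext v
    obtain ⟨a, c, rfl⟩ := hdecomp v
    simp only [map_add]
    rw [hKfix a a.2, hPfix c c.2]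
    simp
  have hsurj : Function.Surjective φ := by
    intro h
    set P := perp b K with hPdef
    let pe := Submodule.prodEquivOfIsCompl K P hcompl
    let hu : ↥K ≃ₗ[k] ↥K := LinearEquiv.ofLinear
      ((h : (↥K →ₗ[k] ↥K)ˣ) : ↥K →ₗ[k] ↥K) ((h : (↥K →ₗ[k] ↥K)ˣ)).inv
      (by rw [← Module.End.mul_eq_comp]; exact ((h : (↥K →ₗ[k] ↥K)ˣ)).val_inv)
      (by rw [← Module.End.mul_eq_comp]; exact ((h : (↥K →ₗ[k] ↥K)ˣ)).inv_val)
    let E : V ≃ₗ[k] V := pe.symm ≪≫ₗ (hu.prodCongr (LinearEquiv.refl k ↥P)) ≪≫ₗ pe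
    have hEadd : ∀ (a : ↥K) (c : ↥P), E (↑a + ↑c) = ↑(hu a) + ↑c := by
      intro a c
      have h1 : pe.symm (↑a + ↑c) = (a, c) := by
        rw [LinearEquiv.symm_apply_eq]
        rfl
      show pe ((hu.prodCongr (LinearEquiv.refl k ↥P)) (pe.symm (↑a + ↑c))) = _
      rw [h1]
      rfl
    let G : (V →ₗ[k] V)ˣ :=
      ⟨E.toLinearMap, E.symm.toLinearMap,
        by ext v; simp [Module.End.mul_apply],
        by ext v; simp [Module.End.mul_apply]⟩
    have hGisom : G ∈ isomGroup b := by
      intro x y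
      obtain ⟨a, c, rfl⟩ := hdecomp x
      obtain ⟨a', c', rfl⟩ := hdecomp y
      show b (E (↑a + ↑c)) (E (↑a' + ↑c')) = _
      rw [hEadd a c, hEadd a' c']
      have hmain : b ↑(hu a) ↑(hu a') = b (↑a : V) ↑a' := h.2 a a'
      simp only [map_add, LinearMap.add_apply]
      rw [(hcross (hu a) c').1, (hcross (hu a') c).2, (hcross a c').1, (hcross a' c).2,
        hmain]
    refine ⟨⟨G, hGisom⟩, ?_⟩
    apply Subtype.ext
    apply Units.ext
    ext x
    show (E ((x : V)) : V) = _
    have h0 : (↑x : V) = ↑x + ↑(0 : ↥P) := by simp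
    calc (E (↑x) : V) = E (↑x + ↑(0 : ↥P)) := by rw [← h0]
      _ = ↑(hu x) + ↑(0 : ↥P) := hEadd x 0
      _ = ↑(((h : (↥K →ₗ[k] ↥K)ˣ) : ↥K →ₗ[k] ↥K) x) := by simp [hu]
  refine ⟨⟨halt, hndK⟩, fun g hg => ⟨hgK g hg, hgP g hg, hfix g hg⟩,
    ⟨MulEquiv.ofBijective φ ⟨hinj, hsurj⟩, ?_⟩⟩
  intro g x
  rfl
end

section
/- Let k be a field, V a finite-dimensional k-vector space, b a nondegenerate alternating bilinear form on V, W ⊆ V a subspace, W' = W + W^⊥, and W₀ = W ∩ W^⊥. Let S be the set of k-linear maps φ : V → W₀ that vanish on W' and satisfy b(φ(x), y) = b(φ(y), x) for all x, y ∈ V; then S is a subgroup of the additive group of linear maps V → W₀, for every φ ∈ S the map id_V + φ is an isometry of (V, b) that fixes W' pointwise, and φ ↦ id_V + φ is a group isomorphism from (S, +) onto the group of isometries of (V, b) that fix W' pointwise. -/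
/-- The set of linear maps `φ : V → V` taking values in `W₀ = W ∩ W^⊥`, vanishing on
`W' = W + W^⊥`, and skew in the sense that `b (φ x) y = b (φ y) x` for all `x, y`. -/
def skewSet {k V : Type*} [Field k] [AddCommGroup V] [Module k V]
    (b : V →ₗ[k] V →ₗ[k] k) (W : Submodule k V) : Set (V →ₗ[k] V) :=
  {φ : V →ₗ[k] V | (∀ x : V, φ x ∈ W ⊓ perp b W) ∧
    (∀ x ∈ W ⊔ perp b W, φ x = 0) ∧
    ∀ x y : V, b (φ x) y = b (φ y) x}


section Helpers
variable {k V : Type*} [Field k] [AddCommGroup V] [Module k V]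
variable (b : V →ₗ[k] V →ₗ[k] k)

lemma skew_of_alt (halt : ∀ x : V, b x x = 0) (x y : V) : b x y = -b y x := by
  have h := halt (x + y)
  simp only [map_add, LinearMap.add_apply, halt x, halt y] at h
  linear_combination h

lemma perp_eq_orthogonal (halt : ∀ x : V, b x x = 0) (U : Submodule k V) :
    perp b U = LinearMap.BilinForm.orthogonal b U := by
  ext x
  constructor
  · intro hx u hu
    show b u x = 0
    rw [skew_of_alt b halt u x, hx u hu, neg_zero]
  · intro hx u hu
    have h : b u x = 0 := hx u hu
    rw [skew_of_alt b halt x u, h, neg_zero]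

lemma perp_sup (U U' : Submodule k V) : perp b (U ⊔ U') = perp b U ⊓ perp b U' := by
  ext x
  constructor
  · intro hx
    exact ⟨fun u hu => hx u (Submodule.mem_sup_left hu),
           fun u hu => hx u (Submodule.mem_sup_right hu)⟩
  · rintro ⟨h1, h2⟩ u hu
    obtain ⟨a, ha, c, hc, rfl⟩ := Submodule.mem_sup.1 hu
    rw [map_add, h1 a ha, h2 c hc, add_zero]

lemma perp_perp [FiniteDimensional k V] (halt : ∀ x : V, b x x = 0)
    (hnd : ∀ x : V, (∀ y : V, b x y = 0) → x = 0) (U : Submodule k V) :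
    perp b (perp b U) = U := by
  have hrefl : LinearMap.IsRefl b := fun x y h => by
    rw [skew_of_alt b halt y x, h, neg_zero]
  rw [perp_eq_orthogonal b halt, perp_eq_orthogonal b halt]
  exact LinearMap.BilinForm.orthogonal_orthogonal (hrefl.nondegenerate_iff_separatingLeft.2 hnd) hrefl U

lemma perp_sup_perp [FiniteDimensional k V] (halt : ∀ x : V, b x x = 0)
    (hnd : ∀ x : V, (∀ y : V, b x y = 0) → x = 0) (W : Submodule k V) :
    perp b (W ⊔ perp b W) = W ⊓ perp b W := by
  rw [perp_sup, perp_perp b halt hnd, inf_comm]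

end Helpers

/-- Let `b` be a nondegenerate alternating form on a finite-dimensional vector
space `V`, `W ⊆ V` a subspace, `W' = W + W^⊥`, `W₀ = W ∩ W^⊥`, and `S` the set of linear maps
`φ : V → W₀` vanishing on `W'` with `b (φ x) y = b (φ y) x`.  Then `S` is an additive group;
for every `φ ∈ S` the map `id + φ` is an isometry of `(V, b)` fixing `W'` pointwise; and
`φ ↦ id + φ` is a group isomorphism from `(S, +)` onto the group of isometries of `(V, b)`
fixing `W'` pointwise. -/
theorem statement9 {k V : Type*} [Field k] [AddCommGroup V] [Module k V]
    [FiniteDimensional k V]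
    (b : V →ₗ[k] V →ₗ[k] k)
    (halt : ∀ x : V, b x x = 0)
    (hnd : ∀ x : V, (∀ y : V, b x y = 0) → x = 0)
    (W : Submodule k V) :
    -- `S` is a subgroup of the additive group of linear maps
    ((0 : V →ₗ[k] V) ∈ skewSet b W ∧
      (∀ φ ∈ skewSet b W, ∀ ψ ∈ skewSet b W, φ + ψ ∈ skewSet b W) ∧
      (∀ φ ∈ skewSet b W, -φ ∈ skewSet b W)) ∧
    -- `id + φ` is an isometry fixing `W'` pointwise
    (∀ φ ∈ skewSet b W,
      Function.Bijective (LinearMap.id + φ : V →ₗ[k] V) ∧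
      (∀ x y : V, b ((LinearMap.id + φ : V →ₗ[k] V) x) ((LinearMap.id + φ : V →ₗ[k] V) y)
        = b x y) ∧
      (∀ x ∈ W ⊔ perp b W, (LinearMap.id + φ : V →ₗ[k] V) x = x)) ∧
    -- `φ ↦ id + φ` is a group homomorphism, injective,
    (∀ φ ∈ skewSet b W, ∀ ψ ∈ skewSet b W,
      (LinearMap.id + φ : V →ₗ[k] V) ∘ₗ (LinearMap.id + ψ) = LinearMap.id + (φ + ψ)) ∧
    (∀ φ ∈ skewSet b W, ∀ ψ ∈ skewSet b W,
      (LinearMap.id + φ : V →ₗ[k] V) = LinearMap.id + ψ → φ = ψ) ∧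
    -- and surjective onto the isometries of `(V, b)` fixing `W'` pointwise
    (∀ g : V →ₗ[k] V, Function.Bijective g → (∀ x y : V, b (g x) (g y) = b x y) →
      (∀ x ∈ W ⊔ perp b W, g x = x) → ∃ φ ∈ skewSet b W, g = LinearMap.id + φ) := by
  
  have hsk : ∀ x y : V, b x y = -b y x := skew_of_alt b halt
  have hle : W ⊓ perp b W ≤ W ⊔ perp b W :=
    le_trans inf_le_left le_sup_left
  -- for φ, ψ in S, b (φ x) (ψ y) = 0
  have hzero : ∀ φ ∈ skewSet b W, ∀ ψ ∈ skewSet b W, ∀ x y : V, b (φ x) (ψ y) = 0 := by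
    intro φ hφ ψ hψ x y
    have h1 : φ x ∈ W := (hφ.1 x).1
    have h2 : ψ y ∈ perp b W := (hψ.1 y).2
    rw [hsk, h2 (φ x) h1, neg_zero]
  refine ⟨⟨?_, ?_, ?_⟩, ?_, ?_, ?_, ?_⟩
  · exact ⟨fun x => by simp, fun x _ => rfl, fun x y => by simp⟩
  · intro φ hφ ψ hψ
    refine ⟨fun x => add_mem (hφ.1 x) (hψ.1 x), fun x hx => by
      simp [hφ.2.1 x hx, hψ.2.1 x hx], fun x y => by
      simp only [LinearMap.add_apply, map_add]
      rw [hφ.2.2 x y, hψ.2.2 x y]⟩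
  · intro φ hφ
    refine ⟨fun x => neg_mem (hφ.1 x), fun x hx => by simp [hφ.2.1 x hx], fun x y => by
      simp only [LinearMap.neg_apply, map_neg, neg_inj]
      exact hφ.2.2 x y⟩
  · intro φ hφ
    have hinj : Function.Injective (LinearMap.id + φ : V →ₗ[k] V) := by
      rw [injective_iff_map_eq_zero]
      intro x hx
      simp only [LinearMap.add_apply, LinearMap.id_apply] at hx
      have hxm : x ∈ W ⊔ perp b W := by
        have : x = -φ x := by linear_combination (norm := abel) hx
        rw [this]
        exact neg_mem (hle (hφ.1 x))
      have h0 : φ x = 0 := hφ.2.1 x hxm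
      rw [h0, add_zero] at hx
      exact hx
    refine ⟨⟨hinj, (LinearMap.injective_iff_surjective).1 hinj⟩, ?_, ?_⟩
    · intro x y
      simp only [LinearMap.add_apply, LinearMap.id_apply, map_add]
      have h1 : b (φ x) (φ y) = 0 := hzero φ hφ φ hφ x y
      have h2 : b x (φ y) = -b (φ x) y := by rw [hsk x (φ y), hφ.2.2 y x]
      rw [h1, h2]
      ring
    · intro x hx
      simp [hφ.2.1 x hx]
  · intro φ hφ ψ hψ
    ext x
    have h0 : φ (ψ x) = 0 := hφ.2.1 (ψ x) (hle (hψ.1 x))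
    simp only [LinearMap.comp_apply, LinearMap.add_apply, LinearMap.id_apply, map_add, h0]
    abel
  · intro φ hφ ψ hψ h
    exact add_left_cancel h
  · intro g hbij hiso hfix
    set φ : V →ₗ[k] V := g - LinearMap.id with hφdef
    have hgφ : ∀ x, g x = x + φ x := by
      intro x; simp [hφdef]
    have hvan : ∀ x ∈ W ⊔ perp b W, φ x = 0 := by
      intro x hx
      simp [hφdef, hfix x hx]
    have hmem : ∀ x : V, φ x ∈ W ⊓ perp b W := by
      intro x
      rw [← perp_sup_perp b halt hnd W]
      intro u hu
      have h1 := hiso x u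
      rw [hfix u hu, hgφ x, map_add, LinearMap.add_apply] at h1
      linear_combination h1
    have hzero' : ∀ x y : V, b (φ x) (φ y) = 0 := by
      intro x y
      have h1 : φ x ∈ W := (hmem x).1
      have h2 : φ y ∈ perp b W := (hmem y).2
      rw [hsk, h2 (φ x) h1, neg_zero]
    have hskew : ∀ x y : V, b (φ x) y = b (φ y) x := by
      intro x y
      have h1 := hiso x y
      rw [hgφ x, hgφ y] at h1
      simp only [map_add, LinearMap.add_apply] at h1
      have h2 : b x (φ y) = -b (φ y) x := hsk x (φ y)
      rw [hzero' x y, h2] at h1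
      linear_combination h1
    exact ⟨φ, ⟨hmem, hvan, hskew⟩, by simp [hφdef]⟩
end
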